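/- arXiv:1711.00091 — 3 statements merged into one kernel-verified Lean document; each statement's English description precedes it below -/
import Mathlib

section
/- Let $W=\{(W_i,\omega_i)\}_{i\in I}$ be a fusion frame in $\mathcal{H}$ with fusion frame operator $S_W$. Then the following are equivalent: (1) $W$ is a fusion Riesz basis; (2) $S_W^{-1}W_i \perp W_j$ for all $i\ne j$; (3) $\omega_i^2 \pi_{W_i} S_W^{-1} \pi_{W_j} = \delta_{ij}\pi_{W_j}$ for all $i,j\in I$. -/
open scoped InnerProductSpace
open ContinuousLinearMap (adjoint)
set_option maxHeartbeats 1000000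
set_option synthInstance.maxHeartbeats 400000
noncomputable section

variable {H : Type*} [NormedAddCommGroup H] [InnerProductSpace ℂ H] [CompleteSpace H]
variable {ι : Type*} [Countable ι]

/-- The orthogonal projection onto a closed subspace, as an endomorphism of `H`. -/
noncomputable def projL (W : Submodule ℂ H) [CompleteSpace W] : H →L[ℂ] H :=
  W.subtypeL.comp (Submodule.orthogonalProjection W)

/-- `{(W i, ω i)}` is a fusion frame with bounds `A ≤ B`. -/
def IsFusionFrame (W : ι → Submodule ℂ H) [∀ i, CompleteSpace (W i)]
    (ω : ι → ℝ) (A B : ℝ) : Prop :=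
  ∀ f : H, ∃ s : ℝ,
    HasSum (fun i => (ω i) ^ 2 * ‖(Submodule.orthogonalProjection (W i) f : H)‖ ^ 2) s ∧
    A * ‖f‖ ^ 2 ≤ s ∧ s ≤ B * ‖f‖ ^ 2

/-- `{(W i, ω i)}` is a Bessel fusion sequence with bound `B`. -/
def IsBesselFusion (W : ι → Submodule ℂ H) [∀ i, CompleteSpace (W i)]
    (ω : ι → ℝ) (B : ℝ) : Prop :=
  ∀ f : H, ∃ s : ℝ,
    HasSum (fun i => (ω i) ^ 2 * ‖(Submodule.orthogonalProjection (W i) f : H)‖ ^ 2) s ∧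
    s ≤ B * ‖f‖ ^ 2

/-- `{(W i, ω i)}` is a fusion Riesz basis with bounds `C ≤ D`. -/
def IsFusionRieszBasisWith (W : ι → Submodule ℂ H) (ω : ι → ℝ) (C D : ℝ) : Prop :=
  (⨆ i, W i).topologicalClosure = ⊤ ∧ 0 < C ∧ C ≤ D ∧
  ∀ (J : Finset ι) (g : ∀ i, W i),
    C * ∑ j ∈ J, ‖(g j : H)‖ ^ 2 ≤ ‖∑ j ∈ J, ω j • ((g j : H))‖ ^ 2 ∧
    ‖∑ j ∈ J, ω j • ((g j : H))‖ ^ 2 ≤ D * ∑ j ∈ J, ‖(g j : H)‖ ^ 2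

/-- `{(W i, ω i)}` is a fusion Riesz basis. -/
def IsFusionRieszBasis (W : ι → Submodule ℂ H) (ω : ι → ℝ) : Prop :=
  ∃ C D : ℝ, IsFusionRieszBasisWith W ω C D

/-! The reconstruction formula `f = ∑ ωᵢ² π_{Wᵢ} S⁻¹ f` drives every implication. For `x ∈ Wᵢ` it
gives two expansions of `x` along the `Wⱼ`, namely `(ωⱼ π_{Wⱼ} S⁻¹ x)ⱼ` and `x` alone at index `i`;
the lower Riesz bound makes such expansions unique, and comparing them gives (2). Conversely, under
(2) the expansion of `y ∈ Wⱼ` collapses to `y = ωⱼ² π_{Wⱼ} S⁻¹ y`, which is (3), and then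
`⟪S⁻¹ f, f⟫ = ∑ ‖fⱼ‖²` for `f = ∑ ωⱼ fⱼ`, which yields a lower Riesz bound. The upper Riesz bound
holds for every Bessel fusion sequence (Cauchy–Schwarz against the analysis sums), and `S` provides
the Bessel bound `‖S‖`. -/

section FusionRiesz

open Filter Topology RCLike Submodule

variable {E : Type*} [NormedAddCommGroup E] [InnerProductSpace ℂ E] {κ : Type*}

def IsFusionFrameOperator (W : κ → Submodule ℂ E) [∀ i, CompleteSpace (W i)] (ω : κ → ℝ)
    (S : E →L[ℂ] E) : Prop :=
  ∀ f, HasSum (fun i => ω i ^ 2 • (W i).starProjection f) (S f)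

variable {W : κ → Submodule ℂ E} {ω : κ → ℝ}

theorem projL_eq_starProjection (K : Submodule ℂ E) [CompleteSpace K] :
    projL K = K.starProjection :=
  rfl

theorem IsFusionRieszBasisWith.eq_zero_of_hasSum {C D : ℝ} (hW : IsFusionRieszBasisWith W ω C D)
    {g : ∀ i, W i} (hg : HasSum (fun i => ω i • (g i : E)) 0) : g = 0 := by
  obtain ⟨-, hC, -, hbound⟩ := hW
  funext k
  have hlim : Tendsto (fun J : Finset κ => ‖∑ j ∈ J, ω j • (g j : E)‖ ^ 2) atTop (𝓝 0) := by
    simpa using (hg.norm.pow 2)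
  have hk : C * ‖(g k : E)‖ ^ 2 ≤ 0 := by
    refine ge_of_tendsto hlim ((eventually_ge_atTop {k}).mono fun J hJ => ?_)
    calc C * ‖(g k : E)‖ ^ 2 ≤ C * ∑ j ∈ J, ‖(g j : E)‖ ^ 2 := by
          gcongr
          exact Finset.single_le_sum (f := fun j => ‖(g j : E)‖ ^ 2) (fun _ _ => by positivity)
            (Finset.singleton_subset_iff.1 hJ)
      _ ≤ _ := (hbound J g).1
  have hsq : ‖(g k : E)‖ ^ 2 ≤ 0 := by nlinarith [sq_nonneg ‖(g k : E)‖]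
  exact Subtype.ext <| norm_eq_zero.1 <| (pow_eq_zero_iff two_ne_zero).1 <|
    le_antisymm hsq (sq_nonneg _)

theorem IsFusionRieszBasisWith.eq_of_hasSum {C D : ℝ} (hW : IsFusionRieszBasisWith W ω C D)
    {g g' : ∀ i, W i} {f : E} (hg : HasSum (fun i => ω i • (g i : E)) f)
    (hg' : HasSum (fun i => ω i • (g' i : E)) f) : g = g' := by
  have h : HasSum (fun i => ω i • ((g - g') i : E)) 0 := by
    simpa only [Pi.sub_apply, Submodule.coe_sub, smul_sub, sub_self] using hg.sub hg'
  exact sub_eq_zero.1 (hW.eq_zero_of_hasSum h)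

variable [∀ i, CompleteSpace (W i)]

theorem IsFusionFrameOperator.isBesselFusion {S : E →L[ℂ] E}
    (hS : IsFusionFrameOperator W ω S) :
    IsBesselFusion W ω ‖S‖ := by
  intro f
  refine ⟨re ⟪f, S f⟫_ℂ, ?_, ?_⟩
  · have h := RCLike.hasSum_re ℂ ((innerSL ℂ f).hasSum (hS f))
    simp only [innerSL_apply_apply] at h
    convert h using 2 with i
    rw [RCLike.real_smul_eq_coe_smul (K := ℂ), inner_smul_real_right,
      ← inner_starProjection_left_eq_right, RCLike.smul_re, re_inner_starProjection_eq_normSq]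
    rfl
  · calc re ⟪f, S f⟫_ℂ ≤ ‖f‖ * ‖S f‖ := re_inner_le_norm _ _
      _ ≤ ‖f‖ * (‖S‖ * ‖f‖) := by gcongr; exact S.le_opNorm f
      _ = ‖S‖ * ‖f‖ ^ 2 := by ring

theorem IsBesselFusion.norm_sq_sum_le {B : ℝ} (hB : IsBesselFusion W ω B) (hB0 : 0 ≤ B)
    (J : Finset κ) (g : ∀ i, W i) :
    ‖∑ j ∈ J, ω j • (g j : E)‖ ^ 2 ≤ B * ∑ j ∈ J, ‖(g j : E)‖ ^ 2 := by
  set f := ∑ j ∈ J, ω j • (g j : E)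
  obtain ⟨s, hs, hsB⟩ := hB f
  have hJs : ∑ j ∈ J, (|ω j| * ‖(W j).starProjection f‖) ^ 2 ≤ s := by
    simp only [mul_pow, sq_abs]
    exact sum_le_hasSum J (fun _ _ => by positivity) hs
  have hf : ‖f‖ ^ 2 ≤ ∑ j ∈ J, ‖(g j : E)‖ * (|ω j| * ‖(W j).starProjection f‖) := by
    rw [← inner_self_eq_norm_sq (𝕜 := ℂ), sum_inner, map_sum]
    gcongr with j
    rw [← starProjection_eq_self_iff.2 (smul_of_tower_mem _ (ω j) (g j).2),
      inner_starProjection_left_eq_right]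
    calc re ⟪ω j • (g j : E), (W j).starProjection f⟫_ℂ
        ≤ ‖ω j • (g j : E)‖ * ‖(W j).starProjection f‖ := re_inner_le_norm _ _
      _ = ‖(g j : E)‖ * (|ω j| * ‖(W j).starProjection f‖) := by
            rw [norm_smul, Real.norm_eq_abs]; ring
  have hf4 : (‖f‖ ^ 2) ^ 2 ≤ (∑ j ∈ J, ‖(g j : E)‖ ^ 2) * (B * ‖f‖ ^ 2) :=
    calc (‖f‖ ^ 2) ^ 2 ≤ (∑ j ∈ J, ‖(g j : E)‖ * (|ω j| * ‖(W j).starProjection f‖)) ^ 2 := by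
          gcongr
      _ ≤ _ := Finset.sum_mul_sq_le_sq_mul_sq _ _ _
      _ ≤ _ := by gcongr; exact hJs.trans hsB
  rcases (sq_nonneg ‖f‖).eq_or_lt with hf0 | hfpos
  · rw [← hf0]; positivity
  · nlinarith

theorem IsFusionFrameOperator.hasSum_sq_smul_starProjection_inverse {S S' : E →L[ℂ] E}
    (hS : IsFusionFrameOperator W ω S) (hSS' : S.comp S' = 1) (f : E) :
    HasSum (fun i => ω i ^ 2 • (W i).starProjection (S' f)) f := by
  simpa [← ContinuousLinearMap.comp_apply, hSS'] using hS (S' f)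

theorem inner_inverse_eq_zero_of_isFusionRieszBasis (hω : ∀ i, ω i ≠ 0) {S S' : E →L[ℂ] E}
    (hS : IsFusionFrameOperator W ω S) (hSS' : S.comp S' = 1)
    (hW : IsFusionRieszBasis W ω) {i j : κ} (hij : i ≠ j) {x y : E} (hx : x ∈ W i)
    (hy : y ∈ W j) : ⟪S' x, y⟫_ℂ = 0 := by
  classical
  obtain ⟨C, D, hW⟩ := hW
  let a : ∀ k, W k := fun k =>
    ⟨ω k • (W k).starProjection (S' x), smul_of_tower_mem _ _ (starProjection_apply_mem _ _)⟩
  let b : ∀ k, W k := Pi.single i ⟨(ω i)⁻¹ • x, smul_of_tower_mem _ _ hx⟩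
  have ha : HasSum (fun k => ω k • (a k : E)) x := by
    simpa only [a, smul_smul, ← sq] using hS.hasSum_sq_smul_starProjection_inverse hSS' x
  have hb : HasSum (fun k => ω k • (b k : E)) x := by
    convert hasSum_single i fun k hk => ?_
    · simp [b, smul_smul, hω i]
    · simp [b, hk]
  have hPj : (W j).starProjection (S' x) = 0 := by
    have hab := congrArg (fun g : ∀ k, W k => (g j : E)) (hW.eq_of_hasSum ha hb)
    simpa [a, b, hij.symm, hω j] using hab
  exact (mem_orthogonal' _ _).1 ((starProjection_apply_eq_zero_iff _).1 hPj) y hy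

theorem starProjection_inverse_eq_zero_of_ne {S' : E →L[ℂ] E}
    (horth : ∀ i j, i ≠ j → ∀ x ∈ W i, ∀ y ∈ W j, ⟪S' x, y⟫_ℂ = 0) {i j : κ} (hij : i ≠ j) {y : E}
    (hy : y ∈ W j) : (W i).starProjection (S' y) = 0 :=
  (starProjection_apply_eq_zero_iff _).2 <| (mem_orthogonal' _ _).2 fun _ hu =>
    horth j i hij.symm y hy _ hu

theorem sq_smul_starProjection_inverse_of_mem {S S' : E →L[ℂ] E}
    (hS : IsFusionFrameOperator W ω S) (hSS' : S.comp S' = 1)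
    (horth : ∀ i j, i ≠ j → ∀ x ∈ W i, ∀ y ∈ W j, ⟪S' x, y⟫_ℂ = 0) {j : κ} {y : E}
    (hy : y ∈ W j) : ω j ^ 2 • (W j).starProjection (S' y) = y := by
  refine (hasSum_single j fun i hij => ?_).unique (hS.hasSum_sq_smul_starProjection_inverse hSS' y)
  rw [starProjection_inverse_eq_zero_of_ne horth hij hy, smul_zero]

theorem sq_smul_projL_comp_inverse_comp_projL [DecidableEq κ] {S S' : E →L[ℂ] E}
    (hS : IsFusionFrameOperator W ω S) (hSS' : S.comp S' = 1)
    (horth : ∀ i j, i ≠ j → ∀ x ∈ W i, ∀ y ∈ W j, ⟪S' x, y⟫_ℂ = 0) (i j : κ) :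
    ω i ^ 2 • ((projL (W i)).comp (S'.comp (projL (W j)))) =
      if i = j then projL (W j) else 0 := by
  ext f
  have hf : (W j).starProjection f ∈ W j := starProjection_apply_mem _ f
  simp only [projL_eq_starProjection, smul_apply, ContinuousLinearMap.comp_apply]
  split_ifs with hij
  · subst hij
    exact sq_smul_starProjection_inverse_of_mem hS hSS' horth hf
  · rw [starProjection_inverse_eq_zero_of_ne horth hij hf, smul_zero, zero_apply]

theorem inner_inverse_eq_zero_of_sq_smul_projL_comp [DecidableEq κ] (hω : ∀ i, ω i ≠ 0)
    {S' : E →L[ℂ] E}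
    (hproj : ∀ i j, ω i ^ 2 • ((projL (W i)).comp (S'.comp (projL (W j)))) =
      if i = j then projL (W j) else 0)
    {i j : κ} (hij : i ≠ j) {x y : E} (hx : x ∈ W i) (hy : y ∈ W j) : ⟪S' x, y⟫_ℂ = 0 := by
  have h := congrArg (fun T : E →L[ℂ] E => T x) (hproj j i)
  simp only [smul_apply, ContinuousLinearMap.comp_apply, if_neg hij.symm, zero_apply,
    projL_eq_starProjection, starProjection_eq_self_iff.2 hx, smul_eq_zero,
    pow_eq_zero_iff two_ne_zero, hω j, false_or] at h
  exact (mem_orthogonal' _ _).1 ((starProjection_apply_eq_zero_iff _).1 h) y hy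

theorem inner_inverse_sum_eq_sum_norm_sq {S S' : E →L[ℂ] E}
    (hS : IsFusionFrameOperator W ω S) (hSS' : S.comp S' = 1)
    (horth : ∀ i j, i ≠ j → ∀ x ∈ W i, ∀ y ∈ W j, ⟪S' x, y⟫_ℂ = 0) (J : Finset κ) (g : ∀ i, W i) :
    ⟪S' (∑ j ∈ J, ω j • (g j : E)), ∑ j ∈ J, ω j • (g j : E)⟫_ℂ =
      ∑ j ∈ J, (‖(g j : E)‖ : ℂ) ^ 2 := by
  have hpair : ∀ k j, ⟪S' (ω k • (g k : E)), ω j • (g j : E)⟫_ℂ =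
      (ω k * ω j : ℝ) • ⟪S' (g k), (g j : E)⟫_ℂ := by
    intro k j
    rw [ContinuousLinearMap.map_smul_of_tower, real_smul_eq_coe_smul (K := ℂ),
      real_smul_eq_coe_smul (K := ℂ), inner_smul_real_left, inner_smul_real_right, smul_smul]
  have hdiag : ∀ k, ⟪S' (ω k • (g k : E)), ω k • (g k : E)⟫_ℂ = (‖(g k : E)‖ : ℂ) ^ 2 := by
    intro k
    have hk := sq_smul_starProjection_inverse_of_mem hS hSS' horth (g k).2
    rw [real_smul_eq_coe_smul (K := ℂ)] at hk
    refine Eq.trans ?_ (inner_self_eq_norm_sq_to_K (g k : E))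
    nth_rw 3 [← hk]
    rw [hpair, inner_smul_real_left, inner_starProjection_left_eq_right,
      starProjection_eq_self_iff.2 (g k).2, sq]
  rw [map_sum, sum_inner]
  refine Finset.sum_congr rfl fun k hk => ?_
  rw [inner_sum, Finset.sum_eq_single k (fun j _ hjk => ?_) (absurd hk), hdiag]
  rw [hpair, horth k j (Ne.symm hjk) _ (g k).2 _ (g j).2, smul_zero]

theorem IsFusionFrameOperator.topologicalClosure_iSup_eq_top [CompleteSpace E] {S : E →L[ℂ] E}
    (hS : IsFusionFrameOperator W ω S) (hinj : Function.Injective S) :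
    (⨆ i, W i).topologicalClosure = ⊤ := by
  rw [topologicalClosure_eq_top_iff, eq_bot_iff]
  intro f hf
  have hP : ∀ i, (W i).starProjection f = 0 := fun i =>
    (starProjection_apply_eq_zero_iff _).2 (orthogonal_le (le_iSup W i) hf)
  have hSf : S f = 0 := (hS f).unique (by simpa only [hP, smul_zero] using hasSum_zero)
  exact (mem_bot ℂ).2 (hinj (hSf.trans S.map_zero.symm))

theorem isFusionRieszBasis_of_inner_inverse_eq_zero [CompleteSpace E] {S S' : E →L[ℂ] E}
    (hS : IsFusionFrameOperator W ω S) (hSS' : S.comp S' = 1) (hS'S : S'.comp S = 1)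
    (horth : ∀ i j, i ≠ j → ∀ x ∈ W i, ∀ y ∈ W j, ⟪S' x, y⟫_ℂ = 0) : IsFusionRieszBasis W ω := by
  have hinj : Function.Injective S :=
    Function.LeftInverse.injective (g := S') fun f => congr($hS'S f)
  -- `(‖S'‖ + 1)⁻¹` rather than `‖S'‖⁻¹`, which is `0` when `E` is trivial
  refine ⟨(‖S'‖ + 1)⁻¹, max ‖S‖ (‖S'‖ + 1)⁻¹, hS.topologicalClosure_iSup_eq_top hinj,
    by positivity, le_max_right _ _, fun J g => ⟨?_, ?_⟩⟩
  · set f := ∑ j ∈ J, ω j • (g j : E)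
    have hre : ∑ j ∈ J, ‖(g j : E)‖ ^ 2 = re ⟪S' f, f⟫_ℂ := by
      rw [inner_inverse_sum_eq_sum_norm_sq hS hSS' horth]
      simp only [← Complex.ofReal_pow, map_sum, re_to_complex, Complex.ofReal_re]
    rw [inv_mul_le_iff₀ (by positivity), hre]
    calc re ⟪S' f, f⟫_ℂ ≤ ‖S' f‖ * ‖f‖ := re_inner_le_norm _ _
      _ ≤ ‖S'‖ * ‖f‖ * ‖f‖ := by gcongr; exact S'.le_opNorm f
      _ ≤ (‖S'‖ + 1) * ‖f‖ ^ 2 := by nlinarith [norm_nonneg f]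
  · calc _ ≤ ‖S‖ * ∑ j ∈ J, ‖(g j : E)‖ ^ 2 :=
          hS.isBesselFusion.norm_sq_sum_le (norm_nonneg S) J g
      _ ≤ _ := by gcongr; exact le_max_left _ _

end FusionRiesz

theorem stmt5_general [DecidableEq ι] (W : ι → Submodule ℂ H) [∀ i, CompleteSpace (W i)]
    (ω : ι → ℝ) (hω : ∀ i, 0 < ω i)
    (S S' : H →L[ℂ] H)
    (hS : ∀ f, HasSum (fun i => (ω i) ^ 2 • ((Submodule.orthogonalProjection (W i) f : H))) (S f))
    (hS' : S.comp S' = 1 ∧ S'.comp S = 1) :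
    (IsFusionRieszBasis W ω ↔
      ∀ i j, i ≠ j → ∀ x ∈ W i, ∀ y ∈ W j, ⟪S' x, y⟫_ℂ = 0) ∧
    (IsFusionRieszBasis W ω ↔
      ∀ i j : ι, (ω i) ^ 2 • ((projL (W i)).comp (S'.comp (projL (W j)))) =
        if i = j then projL (W j) else 0) := by
  have hω₀ : ∀ i, ω i ≠ 0 := fun i => (hω i).ne'
  have h12 : IsFusionRieszBasis W ω → ∀ i j, i ≠ j → ∀ x ∈ W i, ∀ y ∈ W j, ⟪S' x, y⟫_ℂ = 0 :=
    fun hW _ _ hij _ hx _ hy =>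
      inner_inverse_eq_zero_of_isFusionRieszBasis hω₀ hS hS'.1 hW hij hx hy
  have h21 := isFusionRieszBasis_of_inner_inverse_eq_zero hS hS'.1 hS'.2
  have h23 := sq_smul_projL_comp_inverse_comp_projL hS hS'.1
  exact ⟨⟨h12, h21⟩, fun hW => h23 (h12 hW), fun hproj => h21 fun _ _ hij _ hx _ hy =>
    inner_inverse_eq_zero_of_sq_smul_projL_comp hω₀ hproj hij hx hy⟩

/-- for a fusion frame `W` with fusion frame operator `S_W`, TFAE:
(1) `W` is a fusion Riesz basis; (2) `S_W⁻¹ Wᵢ ⟂ Wⱼ` for `i ≠ j`;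
(3) `ωᵢ² π_{Wᵢ} S_W⁻¹ π_{Wⱼ} = δᵢⱼ π_{Wⱼ}`. -/
theorem stmt5 [DecidableEq ι] (W : ι → Submodule ℂ H) [∀ i, CompleteSpace (W i)]
    (ω : ι → ℝ) (hω : ∀ i, 0 < ω i) (A B : ℝ) (hA : 0 < A) (hAB : A ≤ B)
    (hframe : IsFusionFrame W ω A B)
    (S S' : H →L[ℂ] H)
    (hS : ∀ f, HasSum (fun i => (ω i) ^ 2 • ((Submodule.orthogonalProjection (W i) f : H))) (S f))
    (hS' : S.comp S' = 1 ∧ S'.comp S = 1) :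
    (IsFusionRieszBasis W ω ↔
      ∀ i j, i ≠ j → ∀ x ∈ W i, ∀ y ∈ W j, ⟪S' x, y⟫_ℂ = 0) ∧
    (IsFusionRieszBasis W ω ↔
      ∀ i j : ι, (ω i) ^ 2 • ((projL (W i)).comp (S'.comp (projL (W j)))) =
        if i = j then projL (W j) else 0) :=
  stmt5_general W ω hω S S' hS hS'
end
end

section
/- Let $W=\{(W_i,\omega_i)\}_{i\in I}$ be a fusion Riesz basis in $\mathcal{H}$. Then the following are equivalent: (1) $W$ is a fusion orthonormal basis; (2) the fusion Gram matrix $\mathcal{G}_W = \phi_{WW}T_W^*T_W$ equals the identity on $(\sum_{i\in I}\oplus W_i)_{\ell^2}$; (3) the fusion Gram matrix of the 1-uniform family $W' = \{(W_i,1)\}$ equals the identity on $(\sum_{i\in I}\oplus W_i)_{\ell^2}$. -/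
open scoped InnerProductSpace
open ContinuousLinearMap (adjoint)
set_option maxHeartbeats 1000000
set_option synthInstance.maxHeartbeats 400000
noncomputable section

variable {H : Type*} [NormedAddCommGroup H] [InnerProductSpace ℂ H] [CompleteSpace H]
variable {ι : Type*} [Countable ι]

/-! The synthesis operator `T f = ∑ ω_i f_i` is injective by the lower Riesz bound, and
`T T* = S_W` because `(T* g)_i = ω_i π_{W_i} g`. Hence `T* S_W⁻¹ x = ω_i⁻¹ δ_i x` for `x ∈ W_i`, so
`π_{W_i} S_W⁻¹` is `ω_i⁻²` on `W_i` and the `i`-th coordinate of `𝒢_W f` is `ω_i⁻¹ π_{W_i} (T f)`.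
Thus `𝒢_W = 1` says `π_{W_i} (∑_j ω_j f_j) = ω_i f_i` for every `f ∈ ℓ²`, which (tested on
`f = δ_j y`) is exactly the mutual orthogonality of the `W_i`; completeness of the family is part
of being a Riesz basis. The 1-uniform family is handled by the same argument with weights `1`: its
synthesis operator is still injective, by rescaling `f_i` to `ω_i⁻¹ f_i`. -/

namespace FusionFrame

open Filter Topology Submodule

variable {H : Type*} [NormedAddCommGroup H] [InnerProductSpace ℂ H]
variable {ι : Type*} {W : ι → Submodule ℂ H}

section LowerRieszBound

variable {ω : ι → ℝ} {C : ℝ} (hC0 : 0 < C)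
  (hC : ∀ (J : Finset ι) (g : ∀ i, W i),
    C * ∑ j ∈ J, ‖(g j : H)‖ ^ 2 ≤ ‖∑ j ∈ J, ω j • (g j : H)‖ ^ 2)
include hC0 hC

/-- Every finite partial sum over `J ∋ j` bounds `C ‖g j‖²` and tends to `0`. -/
theorem eq_zero_of_hasSum_smul_eq_zero {g : ∀ i, W i}
    (hg : HasSum (fun j => ω j • (g j : H)) 0) : g = 0 := by
  classical
  funext j
  have hlim : Tendsto (fun J : Finset ι => ‖∑ k ∈ J, ω k • (g k : H)‖ ^ 2) atTop (𝓝 0) := by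
    simpa using hg.norm.pow 2
  have hbound : ∀ᶠ J in atTop, C * ‖(g j : H)‖ ^ 2 ≤ ‖∑ k ∈ J, ω k • (g k : H)‖ ^ 2 := by
    filter_upwards [eventually_ge_atTop {j}] with J hJ
    calc C * ‖(g j : H)‖ ^ 2 ≤ C * ∑ k ∈ J, ‖(g k : H)‖ ^ 2 := by
          gcongr
          exact Finset.single_le_sum (f := fun k => ‖(g k : H)‖ ^ 2) (fun k _ => by positivity)
            (hJ (Finset.mem_singleton_self j))
      _ ≤ _ := hC J g
  have hCg : C * ‖(g j : H)‖ ^ 2 ≤ 0 := ge_of_tendsto hlim hbound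
  have : ‖(g j : H)‖ ^ 2 ≤ 0 := nonpos_of_mul_nonpos_right hCg hC0
  simpa using this

theorem injective_of_hasSum_smul (hω : ∀ i, ω i ≠ 0) {ν : ι → ℝ} (hν : ∀ i, ν i ≠ 0)
    (T : lp (fun i => W i) 2 →L[ℂ] H) (hT : ∀ f, HasSum (fun i => ν i • (f i : H)) (T f)) :
    Function.Injective T := by
  refine (injective_iff_map_eq_zero T).2 fun f hf => ?_
  have hg : HasSum (fun j => ω j • ((((ω j)⁻¹ * ν j) • f j : W j) : H)) 0 := by
    simpa [smul_smul, ← mul_assoc, mul_inv_cancel₀ (hω _), hf] using hT f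
  have hzero := eq_zero_of_hasSum_smul_eq_zero hC0 hC hg
  refine lp.ext (funext fun j => ?_)
  have := congrFun hzero j
  simpa [hω j, hν j] using this

end LowerRieszBound

variable {ν : ι → ℝ} {T : lp (fun i => W i) 2 →L[ℂ] H}
  (hT : ∀ f, HasSum (fun i => ν i • (f i : H)) (T f))
include hT

theorem apply_lp_single [DecidableEq ι] (i : ι) (a : W i) :
    T (lp.single 2 i a) = ν i • (a : H) := by
  refine (hT _).unique ?_
  convert hasSum_ite_eq i (ν i • (a : H)) using 2 with j
  by_cases h : j = i
  · subst h; simp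
  · simp [h]

variable [∀ i, CompleteSpace (W i)]

theorem orthogonalProjectionOnto_apply_of_orthogonal
    (horth : ∀ i j, i ≠ j → ∀ x ∈ W i, ∀ y ∈ W j, ⟪x, y⟫_ℂ = 0)
    (f : lp (fun i => W i) 2) (i : ι) :
    (orthogonalProjectionOnto (W i) (T f) : H) = ν i • (f i : H) := by
  classical
  have hmap := ((W i).subtypeL ∘L orthogonalProjectionOnto (W i)).hasSum (hT f)
  refine hmap.unique ?_
  convert hasSum_ite_eq i (ν i • (f i : H)) using 2 with j
  by_cases h : j = i
  · subst h
    simp [orthogonalProjectionOnto_mem_subspace_eq_self]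
  · have hperp : orthogonalProjectionOnto (W i) (f j : H) = 0 := by
      rw [orthogonalProjectionOnto_eq_zero_iff, mem_orthogonal]
      exact fun u hu => horth i j (Ne.symm h) u hu _ (f j).2
    simp [h, ContinuousLinearMap.map_smul_of_tower, hperp]

variable [CompleteSpace H]

theorem adjoint_apply_coe (g : H) (i : ι) :
    (adjoint T g i : H) = ν i • (orthogonalProjectionOnto (W i) g : H) := by
  classical
  suffices adjoint T g i = ν i • orthogonalProjectionOnto (W i) g by rw [this]; rfl
  refine ext_inner_right ℂ fun a => ?_
  rw [← lp.inner_single_right, ContinuousLinearMap.adjoint_inner_left, apply_lp_single hT,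
    ← Complex.coe_smul, ← Complex.coe_smul, inner_smul_right, inner_smul_left, Complex.conj_ofReal,
    inner_orthogonalProjectionOnto_eq_of_mem_right]

theorem apply_adjoint_apply {S : H →L[ℂ] H}
    (hS : ∀ f, HasSum (fun i => ν i ^ 2 • (orthogonalProjectionOnto (W i) f : H)) (S f)) (g : H) :
    T (adjoint T g) = S g :=
  (hT _).unique (by simpa only [adjoint_apply_coe hT, smul_smul, sq] using hS g)

variable (hν : ∀ i, ν i ≠ 0) (hinj : Function.Injective T) {S Sinv : H →L[ℂ] H}
  (hS : ∀ f, HasSum (fun i => ν i ^ 2 • (orthogonalProjectionOnto (W i) f : H)) (S f))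
  (hSinv : S ∘L Sinv = 1)
include hν hinj hS hSinv

/-- Injectivity of `T` turns `T (T* S⁻¹ x) = x = T (ν_i⁻¹ δ_i x)` into `T* S⁻¹ x = ν_i⁻¹ δ_i x`. -/
theorem orthogonalProjectionOnto_inverse_apply_of_mem {i : ι} {x : H} (hx : x ∈ W i) :
    (orthogonalProjectionOnto (W i) (Sinv x) : H) = (ν i ^ 2)⁻¹ • x := by
  classical
  have hSx : S (Sinv x) = x := by simpa using congrArg (· x) hSinv
  have hcoef : adjoint T (Sinv x) = lp.single 2 i ((ν i)⁻¹ • (⟨x, hx⟩ : W i)) :=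
    hinj <| by
      rw [apply_adjoint_apply hT hS, hSx, apply_lp_single hT, coe_smul_of_tower,
        smul_inv_smul₀ (hν i)]
  have hi := congrArg (fun f : lp (fun i => W i) 2 => (f i : H)) hcoef
  simp only [adjoint_apply_coe hT, lp.single_apply_self, coe_smul_of_tower] at hi
  rw [sq, mul_inv, mul_smul, ← hi, inv_smul_smul₀ (hν i)]

theorem gram_apply_coe {φ : lp (fun i => W i) 2 →L[ℂ] lp (fun i => W i) 2}
    (hφ : ∀ f i, ((φ f) i : H) = (orthogonalProjectionOnto (W i) (Sinv (f i : H)) : H))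
    (f : lp (fun i => W i) 2) (i : ι) :
    ((φ ∘L adjoint T ∘L T) f i : H) = (ν i)⁻¹ • (orthogonalProjectionOnto (W i) (T f) : H) := by
  rw [ContinuousLinearMap.comp_apply, ContinuousLinearMap.comp_apply, hφ, adjoint_apply_coe hT,
    ContinuousLinearMap.map_smul_of_tower, ContinuousLinearMap.map_smul_of_tower, coe_smul_of_tower,
    orthogonalProjectionOnto_inverse_apply_of_mem hT hν hinj hS hSinv (coe_mem _), smul_smul,
    sq, mul_inv, ← mul_assoc, mul_inv_cancel₀ (hν i), one_mul]

theorem pairwise_orthogonal_iff_gram_eq_one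
    {φ : lp (fun i => W i) 2 →L[ℂ] lp (fun i => W i) 2}
    (hφ : ∀ f i, ((φ f) i : H) = (orthogonalProjectionOnto (W i) (Sinv (f i : H)) : H)) :
    (∀ i j, i ≠ j → ∀ x ∈ W i, ∀ y ∈ W j, ⟪x, y⟫_ℂ = 0) ↔ φ ∘L adjoint T ∘L T = 1 := by
  classical
  constructor
  · intro horth
    ext f i
    rw [gram_apply_coe hT hν hinj hS hSinv hφ, orthogonalProjectionOnto_apply_of_orthogonal hT horth,
      inv_smul_smul₀ (hν i)]
    rfl
  · intro hG i j hij x hx y hy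
    have hi := congrArg (fun f : lp (fun i => W i) 2 => (f i : H))
      (DFunLike.congr_fun hG (lp.single 2 j ⟨y, hy⟩))
    simp only [gram_apply_coe hT hν hinj hS hSinv hφ, apply_lp_single hT,
      one_apply_eq_self, lp.single_apply, Pi.single_eq_of_ne hij, ZeroMemClass.coe_zero,
      ContinuousLinearMap.map_smul_of_tower, coe_smul_of_tower, smul_smul] at hi
    have hy_perp : y ∈ (W i)ᗮ := by
      simpa [hν i, hν j, starProjection_apply_eq_zero_iff] using hi
    exact inner_right_of_mem_orthogonal hx hy_perp

end FusionFrame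

/-- for a fusion Riesz basis `W`, TFAE: (1) `W` is a fusion orthonormal basis;
(2) the fusion Gram matrix `𝒢_W = φ_WW T_W^* T_W` is the identity; (3) the fusion Gram
matrix of the 1-uniform family `W' = {(Wᵢ,1)}` is the identity. -/
theorem stmt12 (W : ι → Submodule ℂ H) [∀ i, CompleteSpace (W i)]
    (ω : ι → ℝ) (hω : ∀ i, 0 < ω i)
    (hriesz : IsFusionRieszBasis W ω)
    (TW Tone : lp (fun i => ↥(W i)) 2 →L[ℂ] H)
    (hTW : ∀ f, HasSum (fun i => ω i • ((f i : H))) (TW f))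
    (hTone : ∀ f, HasSum (fun i => ((f i : H))) (Tone f))
    (SW SWinv SWp SWpinv : H →L[ℂ] H)
    (hSW : ∀ f, HasSum (fun i => (ω i) ^ 2 • ((Submodule.orthogonalProjection (W i) f : H))) (SW f))
    (hSWinv : SW.comp SWinv = 1 ∧ SWinv.comp SW = 1)
    (hSWp : ∀ f, HasSum (fun i => ((Submodule.orthogonalProjection (W i) f : H))) (SWp f))
    (hSWpinv : SWp.comp SWpinv = 1 ∧ SWpinv.comp SWp = 1)
    (φ φp : lp (fun i => ↥(W i)) 2 →L[ℂ] lp (fun i => ↥(W i)) 2)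
    (hφ : ∀ f i, ((φ f) i : H) = (Submodule.orthogonalProjection (W i) (SWinv ((f i : H))) : H))
    (hφp : ∀ f i, ((φp f) i : H) = (Submodule.orthogonalProjection (W i) (SWpinv ((f i : H))) : H)) :
    (((∀ i j, i ≠ j → ∀ x ∈ W i, ∀ y ∈ W j, ⟪x, y⟫_ℂ = 0) ∧
        (⨆ i, W i).topologicalClosure = ⊤) ↔
      φ ∘L (adjoint TW) ∘L TW = 1) ∧
    (((∀ i j, i ≠ j → ∀ x ∈ W i, ∀ y ∈ W j, ⟪x, y⟫_ℂ = 0) ∧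
        (⨆ i, W i).topologicalClosure = ⊤) ↔
      φp ∘L (adjoint Tone) ∘L Tone = 1) := by
  obtain ⟨C, D, hcl, hC0, -, hbounds⟩ := hriesz
  have hlower := fun J g => (hbounds J g).1
  have hω0 : ∀ i, ω i ≠ 0 := fun i => (hω i).ne'
  have hTone' : ∀ f, HasSum (fun i => (1 : ℝ) • (f i : H)) (Tone f) := by simpa using hTone
  have hSWp' : ∀ f, HasSum (fun i => (1 : ℝ) ^ 2 •
      (Submodule.orthogonalProjectionOnto (W i) f : H)) (SWp f) := by simpa using hSWp
  have hinjW := FusionFrame.injective_of_hasSum_smul hC0 hlower hω0 hω0 TW hTW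
  have hinjOne := FusionFrame.injective_of_hasSum_smul hC0 hlower hω0
    (ν := fun _ => 1) (fun _ => one_ne_zero) Tone hTone'
  simp only [hcl, and_true]
  exact ⟨FusionFrame.pairwise_orthogonal_iff_gram_eq_one hTW hω0 hinjW hSW hSWinv.1 hφ,
    FusionFrame.pairwise_orthogonal_iff_gram_eq_one hTone' (fun _ => one_ne_zero) hinjOne hSWp'
      hSWpinv.1 hφp⟩
end
end

section
/- Let $W=\{(W_i,\omega_i)\}_{i\in I}$ be a fusion frame with lower bound $A_W$. Then the operator $L_W = T_W\phi_{WW}T_W^* = \sum_{i\in I}\omega_i^2\pi_{W_i}S_W^{-1}\pi_{W_i}$ is self-adjoint, positive, and invertible; in fact $\langle L_W f, f\rangle \ge \frac{A_W}{\|S_W^{1/2}\|^2}\|f\|^2$ for all $f\in\mathcal{H}$. -/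
open scoped InnerProductSpace
open ContinuousLinearMap (adjoint)
set_option maxHeartbeats 1000000
set_option synthInstance.maxHeartbeats 400000
noncomputable section

variable {H : Type*} [NormedAddCommGroup H] [InnerProductSpace ℂ H] [CompleteSpace H]
variable {ι : Type*} [Countable ι]

/-! Writing `g = T_W^* f`, whose `i`-th component is `ω_i π_{W_i} f`, one gets
`⟪L_W f, f⟫ = ∑ ω_i² ⟪S_W⁻¹ π_{W_i} f, π_{W_i} f⟫ = ∑ ω_i² ‖R S_W⁻¹ π_{W_i} f‖²`, where `R = S_W^{1/2}`,
and `‖π_{W_i} f‖ ≤ ‖R‖ ‖R S_W⁻¹ π_{W_i} f‖` since `R² S_W⁻¹ = 1`. The lower frame bound then gives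
`A_W ‖f‖² ≤ ‖R‖² ⟪L_W f, f⟫`. Self-adjointness of `L_W` comes from that of `S_W⁻¹` through
`φ_WW`, and a coercive operator on a Hilbert space is invertible. -/

theorem IsSelfAdjoint.of_mul_eq_one {M : Type*} [Monoid M] [StarMul M] {s t : M}
    (hs : IsSelfAdjoint s) (hst : s * t = 1) : IsSelfAdjoint t := by
  have hts : star t * s = 1 := by
    simpa only [star_mul, hs.star_eq, star_one] using congrArg star hst
  calc star t = star t * (s * t) := by rw [hst, mul_one]
    _ = t := by rw [← mul_assoc, hts, one_mul]

section InnerProductSpace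

variable {𝕜 E : Type*} [RCLike 𝕜] [NormedAddCommGroup E] [InnerProductSpace 𝕜 E] [CompleteSpace E]

theorem ContinuousLinearMap.isUnit_of_forall_le_mul_re_inner (L : E →L[𝕜] E) {A K : ℝ}
    (hA : 0 < A) (h : ∀ x, A * ‖x‖ ^ 2 ≤ K * RCLike.re ⟪L x, x⟫_𝕜) : IsUnit L := by
  -- `|K| + 1` rather than `|K|`, which vanishes when `E` is trivial
  have hK : 0 < |K| + 1 := by positivity
  refine L.isUnit_of_forall_le_norm_inner_map (c := ⟨A / (|K| + 1), by positivity⟩)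
    (NNReal.coe_pos.mp (show 0 < A / (|K| + 1) by positivity)) fun x => ?_
  change ‖x‖ ^ 2 * (A / (|K| + 1)) ≤ _
  rw [mul_div_assoc', div_le_iff₀ hK, mul_comm]
  calc A * ‖x‖ ^ 2 ≤ K * RCLike.re ⟪L x, x⟫_𝕜 := h x
    _ ≤ |K| * ‖⟪L x, x⟫_𝕜‖ := by
      refine (le_abs_self _).trans ?_
      rw [abs_mul]
      gcongr
      exact RCLike.abs_re_le_norm _
    _ ≤ ‖⟪L x, x⟫_𝕜‖ * (|K| + 1) := by nlinarith [norm_nonneg ⟪L x, x⟫_𝕜]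

variable {R T : E →L[𝕜] E}

theorem IsSelfAdjoint.re_inner_apply_self_eq_norm_sq (hR : IsSelfAdjoint R)
    (hRT : ∀ x, R (R (T x)) = x) (x : E) : RCLike.re ⟪T x, x⟫_𝕜 = ‖R (T x)‖ ^ 2 := by
  rw [ContinuousLinearMap.apply_norm_sq_eq_inner_adjoint_right, hR.adjoint_eq,
    ContinuousLinearMap.comp_apply, hRT]

theorem IsSelfAdjoint.re_inner_apply_self_nonneg (hR : IsSelfAdjoint R)
    (hRT : ∀ x, R (R (T x)) = x) (x : E) : 0 ≤ RCLike.re ⟪T x, x⟫_𝕜 := by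
  rw [hR.re_inner_apply_self_eq_norm_sq hRT]
  positivity

theorem IsSelfAdjoint.norm_sq_le_mul_re_inner_apply_self (hR : IsSelfAdjoint R)
    (hRT : ∀ x, R (R (T x)) = x) (x : E) : ‖x‖ ^ 2 ≤ ‖R‖ ^ 2 * RCLike.re ⟪T x, x⟫_𝕜 := by
  have hx : ‖x‖ ≤ ‖R‖ * ‖R (T x)‖ := by
    simpa only [hRT x] using R.le_opNorm (R (T x))
  rw [hR.re_inner_apply_self_eq_norm_sq hRT, ← mul_pow]
  gcongr

end InnerProductSpace

theorem lp.isSelfAdjoint_of_inner_apply {𝕜 ι : Type*} [RCLike 𝕜] {G : ι → Type*}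
    [∀ i, NormedAddCommGroup (G i)] [∀ i, InnerProductSpace 𝕜 (G i)] [∀ i, CompleteSpace (G i)]
    (φ : lp G 2 →L[𝕜] lp G 2) (hφ : ∀ x y i, ⟪φ x i, y i⟫_𝕜 = ⟪x i, φ y i⟫_𝕜) :
    IsSelfAdjoint φ := by
  refine ContinuousLinearMap.isSelfAdjoint_iff_isSymmetric.mpr fun x y => ?_
  change ⟪φ x, y⟫_𝕜 = ⟪x, φ y⟫_𝕜
  refine (lp.hasSum_inner (φ x) y).unique ?_
  simpa only [hφ] using lp.hasSum_inner x (φ y)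

theorem adjoint_synthesis_apply {ι : Type*} (W : ι → Submodule ℂ H) [∀ i, CompleteSpace (W i)]
    (ω : ι → ℝ) {TW : lp (fun i => ↥(W i)) 2 →L[ℂ] H}
    (hTW : ∀ f, HasSum (fun i => ω i • ((f i : H))) (TW f)) (f : H) (i : ι) :
    adjoint TW f i = ω i • Submodule.orthogonalProjection (W i) f := by
  classical
  refine ext_inner_right ℂ fun v => ?_
  have hsingle : TW (lp.single 2 i v) = ω i • (v : H) := by
    refine (hTW _).unique ?_
    convert hasSum_single i fun j hj => ?_
    · simp
    · simp [Pi.single_eq_of_ne hj]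
  rw [← lp.inner_single_right, ContinuousLinearMap.adjoint_inner_left, hsingle,
    inner_smul_right_eq_smul, inner_smul_left_eq_smul,
    Submodule.inner_orthogonalProjectionOnto_eq_of_mem_right]

theorem isSelfAdjoint_of_apply_eq_orthogonalProjection {ι : Type*} (W : ι → Submodule ℂ H)
    [∀ i, CompleteSpace (W i)] {SWinv : H →L[ℂ] H} (hSWinv : IsSelfAdjoint SWinv)
    {φ : lp (fun i => ↥(W i)) 2 →L[ℂ] lp (fun i => ↥(W i)) 2}
    (hφ : ∀ f i, ((φ f) i : H) = (Submodule.orthogonalProjection (W i) (SWinv ((f i : H))) : H)) :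
    IsSelfAdjoint φ := by
  refine lp.isSelfAdjoint_of_inner_apply φ fun x y i => ?_
  have hφ' : ∀ f, φ f i = Submodule.orthogonalProjection (W i) (SWinv (f i)) :=
    fun f => Subtype.ext (hφ f i)
  rw [hφ', hφ', Submodule.inner_orthogonalProjectionOnto_eq_of_mem_right,
    Submodule.inner_orthogonalProjectionOnto_eq_of_mem_left]
  exact hSWinv.isSymmetric _ _

theorem hasSum_re_inner_synthesis_comp_comp_adjoint {ι : Type*} (W : ι → Submodule ℂ H)
    [∀ i, CompleteSpace (W i)] (ω : ι → ℝ) {TW : lp (fun i => ↥(W i)) 2 →L[ℂ] H}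
    (hTW : ∀ f, HasSum (fun i => ω i • ((f i : H))) (TW f)) {SWinv : H →L[ℂ] H}
    {φ : lp (fun i => ↥(W i)) 2 →L[ℂ] lp (fun i => ↥(W i)) 2}
    (hφ : ∀ f i, ((φ f) i : H) = (Submodule.orthogonalProjection (W i) (SWinv ((f i : H))) : H))
    (f : H) :
    HasSum (fun i => ω i ^ 2 * (⟪SWinv (Submodule.orthogonalProjection (W i) f),
      (Submodule.orthogonalProjection (W i) f : H)⟫_ℂ).re)
      (⟪(TW ∘L φ ∘L adjoint TW) f, f⟫_ℂ).re := by
  set g := adjoint TW f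
  have hg : ∀ i, (g i : H) = ω i • (Submodule.orthogonalProjection (W i) f : H) :=
    fun i => congrArg Subtype.val (adjoint_synthesis_apply W ω hTW f i)
  have hterm : ∀ i, (⟪φ g i, g i⟫_ℂ).re = ω i ^ 2 * (⟪SWinv (Submodule.orthogonalProjection (W i) f),
      (Submodule.orthogonalProjection (W i) f : H)⟫_ℂ).re := by
    intro i
    rw [show φ g i = _ from Subtype.ext (hφ g i),
      Submodule.inner_orthogonalProjectionOnto_eq_of_mem_right, hg,
      ContinuousLinearMap.map_smul_of_tower, inner_smul_left_eq_smul, inner_smul_right_eq_smul]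
    simp only [Complex.smul_re, smul_eq_mul]
    ring
  have hsum := (lp.hasSum_inner (φ g) g).mapL Complex.reCLM
  simp only [Complex.reCLM_apply, hterm] at hsum
  rwa [ContinuousLinearMap.comp_apply, ← ContinuousLinearMap.adjoint_inner_right]

theorem stmt15_general (W : ι → Submodule ℂ H) [∀ i, CompleteSpace (W i)]
    (ω : ι → ℝ) (A B : ℝ) (hA : 0 < A)
    (hframe : IsFusionFrame W ω A B)
    (TW : lp (fun i => ↥(W i)) 2 →L[ℂ] H)
    (hTW : ∀ f, HasSum (fun i => ω i • ((f i : H))) (TW f))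
    (SW SWinv : H →L[ℂ] H)
    (hSWinv : SW.comp SWinv = 1 ∧ SWinv.comp SW = 1)
    (φ : lp (fun i => ↥(W i)) 2 →L[ℂ] lp (fun i => ↥(W i)) 2)
    (hφ : ∀ f i, ((φ f) i : H) = (Submodule.orthogonalProjection (W i) (SWinv ((f i : H))) : H))
    (R : H →L[ℂ] H) (hRsa : IsSelfAdjoint R)
    (hRsq : R.comp R = SW) :
    IsSelfAdjoint (TW ∘L φ ∘L (adjoint TW)) ∧
    (∀ f : H, 0 ≤ (⟪(TW ∘L φ ∘L (adjoint TW)) f, f⟫_ℂ).re) ∧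
    (∀ f : H, A / ‖R‖ ^ 2 * ‖f‖ ^ 2 ≤ (⟪(TW ∘L φ ∘L (adjoint TW)) f, f⟫_ℂ).re) ∧
    ∃ Linv : H →L[ℂ] H,
      (TW ∘L φ ∘L (adjoint TW)) ∘L Linv = 1 ∧ Linv ∘L (TW ∘L φ ∘L (adjoint TW)) = 1 := by
  set L := TW ∘L φ ∘L adjoint TW
  have hRS : ∀ x, R (R (SWinv x)) = x := fun x => by
    rw [← ContinuousLinearMap.comp_apply R R, hRsq, ← ContinuousLinearMap.comp_apply,
      hSWinv.1, one_apply_eq_self]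
  have hSW_sa : IsSelfAdjoint SW := by
    rw [← hRsq, ← ContinuousLinearMap.mul_def]
    simpa only [hRsa.star_eq] using IsSelfAdjoint.star_mul_self R
  have hSWinv_sa : IsSelfAdjoint SWinv := hSW_sa.of_mul_eq_one hSWinv.1
  have hL : IsSelfAdjoint L :=
    (isSelfAdjoint_of_apply_eq_orthogonalProjection W hSWinv_sa hφ).conj_adjoint TW
  have hquad := hasSum_re_inner_synthesis_comp_comp_adjoint W ω hTW hφ
  have hpos : ∀ f, 0 ≤ (⟪L f, f⟫_ℂ).re := fun f => (hquad f).nonneg fun i =>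
    mul_nonneg (sq_nonneg _) (hRsa.re_inner_apply_self_nonneg hRS _)
  have hbound : ∀ f, A * ‖f‖ ^ 2 ≤ ‖R‖ ^ 2 * (⟪L f, f⟫_ℂ).re := fun f => by
    obtain ⟨s, hs, hAs, -⟩ := hframe f
    refine hAs.trans (hasSum_le (fun i => ?_) hs ((hquad f).mul_left _))
    rw [mul_left_comm]
    gcongr
    exact hRsa.norm_sq_le_mul_re_inner_apply_self hRS _
  have hlower : ∀ f, A / ‖R‖ ^ 2 * ‖f‖ ^ 2 ≤ (⟪L f, f⟫_ℂ).re := fun f => by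
    rcases (norm_nonneg R).eq_or_lt with hR | hR
    · -- `A / 0 = 0`
      simpa [← hR] using hpos f
    · rw [div_mul_eq_mul_div, div_le_iff₀ (by positivity)]
      linarith [hbound f]
  refine ⟨hL, hpos, hlower, ?_⟩
  obtain hunit := L.isUnit_of_forall_le_mul_re_inner hA hbound
  exact ⟨↑hunit.unit⁻¹, hunit.mul_val_inv, hunit.val_inv_mul⟩

/-- the alternate fusion frame operator `L_W = T_W φ_WW T_W^*` of a fusion
frame is self-adjoint, positive and invertible, with
`⟪L_W f, f⟫ ≥ (A_W/‖S_W^{1/2}‖²)‖f‖²` (`R` denotes the positive square root of `S_W`). -/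
theorem stmt15 (W : ι → Submodule ℂ H) [∀ i, CompleteSpace (W i)]
    (ω : ι → ℝ) (hω : ∀ i, 0 < ω i) (A B : ℝ) (hA : 0 < A) (hAB : A ≤ B)
    (hframe : IsFusionFrame W ω A B)
    (TW : lp (fun i => ↥(W i)) 2 →L[ℂ] H)
    (hTW : ∀ f, HasSum (fun i => ω i • ((f i : H))) (TW f))
    (SW SWinv : H →L[ℂ] H)
    (hSW : ∀ f, HasSum (fun i => (ω i) ^ 2 • ((Submodule.orthogonalProjection (W i) f : H))) (SW f))
    (hSWinv : SW.comp SWinv = 1 ∧ SWinv.comp SW = 1)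
    (φ : lp (fun i => ↥(W i)) 2 →L[ℂ] lp (fun i => ↥(W i)) 2)
    (hφ : ∀ f i, ((φ f) i : H) = (Submodule.orthogonalProjection (W i) (SWinv ((f i : H))) : H))
    (R : H →L[ℂ] H) (hRsa : IsSelfAdjoint R) (hRpos : ∀ f, 0 ≤ (⟪R f, f⟫_ℂ).re)
    (hRsq : R.comp R = SW) :
    IsSelfAdjoint (TW ∘L φ ∘L (adjoint TW)) ∧
    (∀ f : H, 0 ≤ (⟪(TW ∘L φ ∘L (adjoint TW)) f, f⟫_ℂ).re) ∧
    (∀ f : H, A / ‖R‖ ^ 2 * ‖f‖ ^ 2 ≤ (⟪(TW ∘L φ ∘L (adjoint TW)) f, f⟫_ℂ).re) ∧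
    ∃ Linv : H →L[ℂ] H,
      (TW ∘L φ ∘L (adjoint TW)) ∘L Linv = 1 ∧ Linv ∘L (TW ∘L φ ∘L (adjoint TW)) = 1 :=
  stmt15_general W ω A B hA hframe TW hTW SW SWinv hSWinv φ hφ R hRsa hRsq
end
end
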